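/- arXiv:2401.00305 — 9 statements merged into one kernel-verified Lean document; each statement's English description precedes it below -/
import Mathlib

section
/- Let L ⊆ ℝⁿ × ℝⁿ be a Lagrangian subspace with respect to the standard symplectic form. Then there exists a subset I ⊆ {1,…,n} with complement J, and a symmetric n × n real matrix M (with blocks M_II, M_IJ, M_JI, M_JJ according to the splitting of indices into I and J), such that L = { (v,w) ∈ ℝⁿ × ℝⁿ : w_I = M_II v_I + M_IJ w_J and v_J = −M_JI v_I − M_JJ w_J }, where v_I denotes the subvector of v with indices in I, etc. In particular L is globally parametrized by the variables (v_I, w_J). -/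
open Matrix Finset

/-- The standard symplectic form on ℝⁿ × ℝⁿ:
`ω((v₁,w₁),(v₂,w₂)) = w₁ᵀ v₂ − w₂ᵀ v₁`. -/
def symplForm {n : ℕ} (p q : (Fin n → ℝ) × (Fin n → ℝ)) : ℝ :=
  p.2 ⬝ᵥ q.1 - q.2 ⬝ᵥ p.1

/-- A subspace is isotropic if the symplectic form vanishes identically on it. -/
def IsIsotropic {n : ℕ} (L : Submodule ℝ ((Fin n → ℝ) × (Fin n → ℝ))) : Prop :=
  ∀ p ∈ L, ∀ q ∈ L, symplForm p q = 0

/-- A subspace is Lagrangian if it is isotropic and maximal among isotropic subspaces. -/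
def IsLagrangian {n : ℕ} (L : Submodule ℝ ((Fin n → ℝ) × (Fin n → ℝ))) : Prop :=
  IsIsotropic L ∧
    ∀ L' : Submodule ℝ ((Fin n → ℝ) × (Fin n → ℝ)), IsIsotropic L' → L ≤ L' → L' = L

theorem Submodule.eq_top_of_forall_dotProduct_eq_zero {K ι : Type*} [Field K] [Fintype ι]
    {V : Submodule K (ι → K)} (h : ∀ c : ι → K, (∀ x ∈ V, c ⬝ᵥ x = 0) → c = 0) : V = ⊤ := by
  classical
  by_contra hV
  obtain ⟨f, hf0, hVf⟩ := V.exists_le_ker_of_lt_top (lt_top_iff_ne_top.2 hV)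
  have hf : ∀ x, (dotProductEquiv K ι).symm f ⬝ᵥ x = f x := fun x => by
    rw [← dotProductEquiv_apply_apply, LinearEquiv.apply_symm_apply]
  have hc : (dotProductEquiv K ι).symm f = 0 := h _ fun x hx => (hf x).trans (hVf hx)
  exact hf0 (LinearMap.ext fun x => by rw [← hf, hc, zero_dotProduct, LinearMap.zero_apply])

theorem Submodule.exists_finset_restrict_bijective {K ι : Type*} [Field K] [Fintype ι]
    (V : Submodule K (ι → K)) :
    ∃ I : Finset ι, (∀ v ∈ V, (∀ i ∈ I, v i = 0) → v = 0) ∧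
      ∀ c : ι → K, ∃ v ∈ V, ∀ i ∈ I, v i = c i := by
  classical
  obtain ⟨I, hI, hmin⟩ := wellFounded_lt.has_min
    {I : Finset ι | ∀ v ∈ V, (∀ i ∈ I, v i = 0) → v = 0}
    ⟨univ, fun v _ h => funext fun i => h i (mem_univ i)⟩
  have hunit : ∀ k ∈ I, ∃ v ∈ V, v k = 1 ∧ ∀ i ∈ I, i ≠ k → v i = 0 := by
    intro k hk
    obtain ⟨v, hv, hvz, hv0⟩ : ∃ v ∈ V, (∀ i ∈ I.erase k, v i = 0) ∧ v ≠ 0 := by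
      by_contra! h
      exact hmin _ h (erase_ssubset hk)
    have hvk : v k ≠ 0 := fun h => hv0 <| hI v hv fun i hi => by
      by_cases hik : i = k
      · exact hik ▸ h
      · exact hvz i (mem_erase.2 ⟨hik, hi⟩)
    refine ⟨(v k)⁻¹ • v, V.smul_mem _ hv, by simp [hvk], fun i hi hik => ?_⟩
    simp [hvz i (mem_erase.2 ⟨hik, hi⟩)]
  choose! e he using hunit
  refine ⟨I, hI, fun c => ⟨∑ k ∈ I, c k • e k,
    V.sum_mem fun k hk => V.smul_mem _ (he k hk).1, fun i hi => ?_⟩⟩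
  rw [Finset.sum_apply, sum_eq_single_of_mem i hi fun k hk hki => ?_]
  · simp [(he i hi).2.1]
  · simp [(he k hk).2.2 i hi (Ne.symm hki)]

theorem Submodule.exists_linearMap_mem_iff {R E F : Type*} [Ring R] [AddCommGroup E] [Module R E]
    [AddCommGroup F] [Module R F] (g : Submodule R (E × F)) (hsurj : ∀ v, ∃ w, (v, w) ∈ g)
    (hinj : ∀ w, (0, w) ∈ g → w = 0) :
    ∃ T : E →ₗ[R] F, ∀ v w, (v, w) ∈ g ↔ w = T v := by
  have hbij : Function.Bijective ((LinearMap.fst R E F).comp g.subtype) := by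
    refine ⟨(injective_iff_map_eq_zero _).2 fun ⟨⟨v, w⟩, hp⟩ hv => ?_, fun v => ?_⟩
    · obtain rfl : v = 0 := hv
      obtain rfl := hinj w hp
      rfl
    · obtain ⟨w, hw⟩ := hsurj v
      exact ⟨⟨(v, w), hw⟩, rfl⟩
  let e := LinearEquiv.ofBijective _ hbij
  have hfst : ∀ v, (e.symm v : E × F).1 = v := e.apply_symm_apply
  refine ⟨(LinearMap.snd R E F).comp (g.subtype.comp e.symm.toLinearMap),
    fun v w => ⟨fun h => ?_, ?_⟩⟩
  · have : e.symm v = ⟨(v, w), h⟩ := e.symm_apply_eq.2 rfl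
    simp [this]
  · rintro rfl
    have hv : (e.symm v : E × F) = (v, (e.symm v : E × F).2) := Prod.ext (hfst v) rfl
    exact hv ▸ (e.symm v).2

section Symplectic

variable {n : ℕ}

theorem IsLagrangian.mem_of_forall_symplForm_eq_zero {L : Submodule ℝ ((Fin n → ℝ) × (Fin n → ℝ))}
    (hL : IsLagrangian L) {x : (Fin n → ℝ) × (Fin n → ℝ)} (hx : ∀ p ∈ L, symplForm p x = 0) :
    x ∈ L := by
  have hiso : IsIsotropic (L ⊔ Submodule.span ℝ {x}) := by
    intro a ha b hb
    obtain ⟨p, hp, _, hs, rfl⟩ := Submodule.mem_sup.1 ha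
    obtain ⟨q, hq, _, ht, rfl⟩ := Submodule.mem_sup.1 hb
    obtain ⟨s, rfl⟩ := Submodule.mem_span_singleton.1 hs
    obtain ⟨t, rfl⟩ := Submodule.mem_span_singleton.1 ht
    have hpq := hL.1 p hp q hq
    have hpx := hx p hp
    have hqx := hx q hq
    simp only [symplForm, Prod.fst_add, Prod.snd_add, Prod.smul_fst, Prod.smul_snd,
      dotProduct_add, add_dotProduct, smul_dotProduct, dotProduct_smul, smul_eq_mul] at *
    linear_combination hpq + t * hpx - s * hqx
  rw [← hL.2 _ hiso le_sup_left]
  exact Submodule.mem_sup_right (Submodule.mem_span_singleton_self x)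

theorem IsLagrangian.map {L : Submodule ℝ ((Fin n → ℝ) × (Fin n → ℝ))} (hL : IsLagrangian L)
    (e : ((Fin n → ℝ) × (Fin n → ℝ)) ≃ₗ[ℝ] ((Fin n → ℝ) × (Fin n → ℝ)))
    (he : ∀ p q, symplForm (e p) (e q) = symplForm p q) : IsLagrangian (L.map e.toLinearMap) := by
  refine ⟨?_, fun L' hL' hle => ?_⟩
  · rintro _ ⟨p, hp, rfl⟩ _ ⟨q, hq, rfl⟩
    exact (he p q).trans (hL.1 p hp q hq)
  · have hcomap : IsIsotropic (L'.comap e.toLinearMap) := fun p hp q hq =>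
      (he p q).symm.trans (hL' (e p) hp (e q) hq)
    rw [← hL.2 _ hcomap (Submodule.map_le_iff_le_comap.1 hle),
      Submodule.map_comap_eq_of_surjective e.surjective]

theorem IsLagrangian.exists_isSymm_mem_iff {L : Submodule ℝ ((Fin n → ℝ) × (Fin n → ℝ))}
    (hL : IsLagrangian L) (htrans : ∀ w, (0, w) ∈ L → w = 0) :
    ∃ M : Matrix (Fin n) (Fin n) ℝ, M.IsSymm ∧ ∀ v w, (v, w) ∈ L ↔ w = M *ᵥ v := by
  have hfst : L.map (LinearMap.fst ℝ _ _) = ⊤ := by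
    refine Submodule.eq_top_of_forall_dotProduct_eq_zero fun c hc => htrans c ?_
    refine hL.mem_of_forall_symplForm_eq_zero fun p hp => ?_
    simp [symplForm, hc p.1 ⟨p, hp, rfl⟩]
  have hsurj : ∀ v, ∃ w, (v, w) ∈ L := fun v => by
    obtain ⟨⟨v, w⟩, hp, rfl⟩ := hfst ▸ Submodule.mem_top (x := v)
    exact ⟨w, hp⟩
  obtain ⟨T, hT⟩ := L.exists_linearMap_mem_iff hsurj htrans
  refine ⟨LinearMap.toMatrix' T, ?_, fun v w => by rw [hT, LinearMap.toMatrix'_mulVec]⟩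
  have hgraph : ∀ v, (v, T v) ∈ L := fun v => (hT v _).2 rfl
  ext i j
  have h := hL.1 _ (hgraph (Pi.single i 1)) _ (hgraph (Pi.single j 1))
  simp only [symplForm, ← LinearMap.toMatrix'_mulVec, mulVec_single_one, dotProduct_single_one,
    Matrix.col_apply] at h
  rw [Matrix.transpose_apply]
  linarith

noncomputable def partialSwap (I : Finset (Fin n)) :
    ((Fin n → ℝ) × (Fin n → ℝ)) ≃ₗ[ℝ] ((Fin n → ℝ) × (Fin n → ℝ)) where
  toFun p := (fun i => if i ∈ I then p.1 i else p.2 i, fun i => if i ∈ I then p.2 i else -p.1 i)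
  invFun q := (fun i => if i ∈ I then q.1 i else -q.2 i, fun i => if i ∈ I then q.2 i else q.1 i)
  map_add' p q := by ext i <;> by_cases hi : i ∈ I <;> simp [hi, add_comm]
  map_smul' c p := by ext i <;> by_cases hi : i ∈ I <;> simp [hi]
  left_inv p := by ext i <;> by_cases hi : i ∈ I <;> simp [hi]
  right_inv q := by ext i <;> by_cases hi : i ∈ I <;> simp [hi]

theorem symplForm_partialSwap (I : Finset (Fin n)) (p q : (Fin n → ℝ) × (Fin n → ℝ)) :
    symplForm (partialSwap I p) (partialSwap I q) = symplForm p q := by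
  simp only [symplForm, dotProduct, ← sum_sub_distrib]
  refine sum_congr rfl fun i _ => ?_
  by_cases hi : i ∈ I <;> simp [partialSwap, hi, mul_comm, neg_add_eq_sub]

theorem IsIsotropic.eq_zero_of_mem_map_partialSwap {L : Submodule ℝ ((Fin n → ℝ) × (Fin n → ℝ))}
    (hL : IsIsotropic L) {I : Finset (Fin n)}
    (hinj : ∀ v ∈ L.map (LinearMap.fst ℝ _ _), (∀ i ∈ I, v i = 0) → v = 0)
    (hsurj : ∀ c : Fin n → ℝ, ∃ v ∈ L.map (LinearMap.fst ℝ _ _), ∀ i ∈ I, v i = c i) {w : Fin n → ℝ}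
    (hw : (0, w) ∈ L.map (partialSwap I).toLinearMap) : w = 0 := by
  obtain ⟨⟨v, u⟩, hp, hpw⟩ := hw
  have hvI : ∀ i ∈ I, v i = 0 := fun i hi => by
    simpa [partialSwap, hi] using congr_fun (congrArg Prod.fst hpw) i
  have huJ : ∀ i ∉ I, u i = 0 := fun i hi => by
    simpa [partialSwap, hi] using congr_fun (congrArg Prod.fst hpw) i
  obtain rfl : v = 0 := hinj v ⟨_, hp, rfl⟩ hvI
  obtain ⟨_, ⟨⟨q₁, q₂⟩, hq, rfl⟩, hqI⟩ := hsurj u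
  have hu : u ⬝ᵥ u = 0 := by
    have huq : u ⬝ᵥ q₁ = 0 := by simpa [symplForm] using hL _ hp _ hq
    rw [← huq]
    refine sum_congr rfl fun i _ => ?_
    by_cases hi : i ∈ I
    · rw [show q₁ i = u i from hqI i hi]
    · simp [huJ i hi]
  obtain rfl := dotProduct_self_eq_zero.1 hu
  rw [Prod.mk_zero_zero, map_zero] at hpw
  exact (congrArg Prod.snd hpw).symm

theorem partialSwap_snd_eq_mulVec_iff (I : Finset (Fin n)) (M : Matrix (Fin n) (Fin n) ℝ)
    (v w : Fin n → ℝ) :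
    (partialSwap I (v, w)).2 = M *ᵥ (partialSwap I (v, w)).1 ↔
      ((∀ i ∈ I, w i = (∑ j ∈ I, M i j * v j) + ∑ j ∈ Iᶜ, M i j * w j) ∧
       (∀ j ∈ Iᶜ, v j = (- ∑ i ∈ I, M j i * v i) - ∑ i ∈ Iᶜ, M j i * w i)) := by
  have hmulVec : ∀ i, (M *ᵥ (partialSwap I (v, w)).1) i =
      ∑ j ∈ I, M i j * v j + ∑ j ∈ Iᶜ, M i j * w j := fun i => by
    rw [mulVec, dotProduct, ← sum_add_sum_compl I]
    congr 1 <;> refine sum_congr rfl fun j hj => ?_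
    · simp [partialSwap, hj]
    · simp [partialSwap, mem_compl.1 hj]
  simp only [funext_iff, hmulVec]
  constructor
  · intro h
    refine ⟨fun i hi => by simpa [partialSwap, hi] using h i, fun j hj => ?_⟩
    have := h j
    simp only [partialSwap, LinearEquiv.coe_mk, LinearMap.coe_mk, AddHom.coe_mk, mem_compl.1 hj,
      if_false] at this
    linarith
  · rintro ⟨hI, hJ⟩ i
    by_cases hi : i ∈ I
    · simpa [partialSwap, hi] using hI i hi
    · simp only [partialSwap, LinearEquiv.coe_mk, LinearMap.coe_mk, AddHom.coe_mk, hi, if_false]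
      linarith [hJ i (mem_compl.2 hi)]

end Symplectic

/-- Any Lagrangian subspace `L ⊆ ℝⁿ × ℝⁿ` admits a representation: there is a splitting
of the index set `{1,…,n}` into `I` and its complement `J = Iᶜ`, and a symmetric matrix `M`,
such that `L = {(v,w) : w_I = M_II v_I + M_IJ w_J, v_J = −M_JI v_I − M_JJ w_J}`;
in particular `L` is parametrized by `(v_I, w_J)`. -/
theorem lagrangian_representation {n : ℕ}
    (L : Submodule ℝ ((Fin n → ℝ) × (Fin n → ℝ))) (hL : IsLagrangian L) :
    ∃ (I : Finset (Fin n)) (M : Matrix (Fin n) (Fin n) ℝ), M.IsSymm ∧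
      ∀ v w : Fin n → ℝ, ((v, w) ∈ L ↔
        ((∀ i ∈ I, w i = (∑ j ∈ I, M i j * v j) + ∑ j ∈ Iᶜ, M i j * w j) ∧
         (∀ j ∈ Iᶜ, v j = (- ∑ i ∈ I, M j i * v i) - ∑ i ∈ Iᶜ, M j i * w i))) := by
  obtain ⟨I, hinj, hsurj⟩ := (L.map (LinearMap.fst ℝ _ _)).exists_finset_restrict_bijective
  obtain ⟨M, hM, hgraph⟩ := (hL.map (partialSwap I) (symplForm_partialSwap I)).exists_isSymm_mem_iff
    fun w => hL.1.eq_zero_of_mem_map_partialSwap hinj hsurj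
  refine ⟨I, M, hM, fun v w => ?_⟩
  rw [← partialSwap_snd_eq_mulVec_iff, ← hgraph, Prod.mk.eta, Submodule.mem_map_equiv,
    LinearEquiv.symm_apply_apply]
end

section
/- Let A ∈ ℝⁿˣⁿ, B ∈ ℝⁿˣᵐ, C ∈ ℝᵐˣⁿ, D ∈ ℝᵐˣᵐ, and let Q ∈ ℝⁿˣⁿ be symmetric such that the passivity LMI holds, i.e., the symmetric matrix Π := [[Q,0],[0,I_m]]·[[−A,−B],[C,D]] + [[−A,−B],[C,D]]ᵀ·[[Q,0],[0,I_m]] is positive semidefinite. Then the kernel of Q is A-invariant and contained in the kernel of C (i.e., Qz = 0 implies QAz = 0 and Cz = 0). In particular, if (C,A) is observable then ker Q = {0}. -/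
open Matrix

/-- The passivity LMI: the symmetric matrix
`Π := [[Q,0],[0,I]]·[[−A,−B],[C,D]] + [[−A,−B],[C,D]]ᵀ·[[Q,0],[0,I]]`
is positive semidefinite. -/
def PassivityLMI {n m : ℕ} (A : Matrix (Fin n) (Fin n) ℝ) (B : Matrix (Fin n) (Fin m) ℝ)
    (C : Matrix (Fin m) (Fin n) ℝ) (D : Matrix (Fin m) (Fin m) ℝ)
    (Q : Matrix (Fin n) (Fin n) ℝ) : Prop :=
  (fromBlocks Q 0 0 (1 : Matrix (Fin m) (Fin m) ℝ) * fromBlocks (-A) (-B) C D +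
    (fromBlocks (-A) (-B) C D)ᵀ * fromBlocks Q 0 0 (1 : Matrix (Fin m) (Fin m) ℝ)).PosSemidef

/-- If `Q = Qᵀ` satisfies the passivity LMI, then `ker Q` is `A`-invariant and contained in
`ker C`; in particular if `(C,A)` is observable then `ker Q = {0}`. -/
theorem kerQ_A_invariant_subset_kerC {n m : ℕ}
    (A : Matrix (Fin n) (Fin n) ℝ) (B : Matrix (Fin n) (Fin m) ℝ)
    (C : Matrix (Fin m) (Fin n) ℝ) (D : Matrix (Fin m) (Fin m) ℝ)
    (Q : Matrix (Fin n) (Fin n) ℝ) (hQ : Q.IsSymm)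
    (hLMI : PassivityLMI A B C D Q) :
    (∀ z : Fin n → ℝ, Q *ᵥ z = 0 → Q *ᵥ (A *ᵥ z) = 0 ∧ C *ᵥ z = 0) ∧
    ((∀ z : Fin n → ℝ, (∀ k < n, (C * A ^ k) *ᵥ z = 0) → z = 0) →
      ∀ z : Fin n → ℝ, Q *ᵥ z = 0 → z = 0) := by
  unfold PassivityLMI at hLMI
  rw [fromBlocks_transpose, fromBlocks_multiply, fromBlocks_multiply,
    fromBlocks_add] at hLMI
  simp only [Matrix.zero_mul, Matrix.mul_zero, Matrix.one_mul, Matrix.mul_one,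
    add_zero, zero_add] at hLMI
  have key : ∀ z : Fin n → ℝ, Q *ᵥ z = 0 → Q *ᵥ (A *ᵥ z) = 0 ∧ C *ᵥ z = 0 := by
    intro z hz
    set x : Fin n ⊕ Fin m → ℝ := Sum.elim z 0 with hx
    have hvz : z ᵥ* Q = 0 := by rw [← Matrix.mulVec_transpose, hQ, hz]
    have e1 : (Q * -A + (-A)ᵀ * Q) *ᵥ z = Q *ᵥ (-A *ᵥ z) := by
      rw [add_mulVec, ← Matrix.mulVec_mulVec, ← Matrix.mulVec_mulVec, hz,
        mulVec_zero, add_zero]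
    have e2 : (C + (-B)ᵀ * Q) *ᵥ z = C *ᵥ z := by
      rw [add_mulVec, ← Matrix.mulVec_mulVec, hz, mulVec_zero, add_zero]
    have hmul : (fromBlocks (Q * -A + (-A)ᵀ * Q) (Q * -B + Cᵀ)
        (C + (-B)ᵀ * Q) (D + Dᵀ)) *ᵥ x =
        Sum.elim (Q *ᵥ (-A *ᵥ z)) (C *ᵥ z) := by
      rw [hx, fromBlocks_mulVec]
      simp only [Sum.elim_comp_inl, Sum.elim_comp_inr, Matrix.mulVec_zero, add_zero, e1, e2]
    have hdot : star x ⬝ᵥ ((fromBlocks (Q * -A + (-A)ᵀ * Q) (Q * -B + Cᵀ)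
        (C + (-B)ᵀ * Q) (D + Dᵀ)) *ᵥ x) = 0 := by
      rw [hmul, hx, star_trivial, sumElim_dotProduct_sumElim,
        dotProduct_mulVec, hvz, zero_dotProduct, zero_dotProduct, add_zero]
    have hzero := (hLMI.dotProduct_mulVec_zero_iff x).mp hdot
    rw [hmul] at hzero
    have h1 : Q *ᵥ (-A *ᵥ z) = 0 := funext fun i => congrFun hzero (Sum.inl i)
    have h2 : C *ᵥ z = 0 := funext fun i => congrFun hzero (Sum.inr i)
    refine ⟨?_, h2⟩
    rw [neg_mulVec, mulVec_neg, neg_eq_zero] at h1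
    exact h1
  refine ⟨key, fun hobs z hz => hobs z fun k _ => ?_⟩
  have hk : ∀ k : ℕ, Q *ᵥ (A ^ k *ᵥ z) = 0 := by
    intro k
    induction k with
    | zero => simpa using hz
    | succ k ih =>
      have := (key _ ih).1
      rw [pow_succ', ← Matrix.mulVec_mulVec]
      exact this
  rw [← Matrix.mulVec_mulVec]
  exact (key _ (hk k)).2
end

section
/- Let M ⊆ ℝⁿ × ℝⁿ be a monotone subspace, i.e., wᵀv ≥ 0 for all (v,w) ∈ M. Then dim M ≤ n. -/
open Matrix

/-- A subspace `M ⊆ ℝⁿ × ℝⁿ` is monotone if `wᵀv ≥ 0` for all `(v,w) ∈ M`. -/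
def IsMonotoneSubspace {n : ℕ} (M : Submodule ℝ ((Fin n → ℝ) × (Fin n → ℝ))) : Prop :=
  ∀ p ∈ M, 0 ≤ p.2 ⬝ᵥ p.1

/-- Any monotone subspace of ℝⁿ × ℝⁿ has dimension at most n. -/
theorem monotone_subspace_finrank_le {n : ℕ}
    (M : Submodule ℝ ((Fin n → ℝ) × (Fin n → ℝ))) (hM : IsMonotoneSubspace M) :
    Module.finrank ℝ M ≤ n := by
  classical
  -- the map (v, w) ↦ v + w, restricted to M
  let f : M →ₗ[ℝ] (Fin n → ℝ) :=
    (LinearMap.fst ℝ (Fin n → ℝ) (Fin n → ℝ) + LinearMap.snd ℝ (Fin n → ℝ) (Fin n → ℝ)).comp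
      M.subtype
  have hinj : Function.Injective f := by
    rw [← LinearMap.ker_eq_bot]
    rw [LinearMap.ker_eq_bot']
    rintro ⟨⟨v, w⟩, hvw⟩ hf
    have hsum : v + w = 0 := hf
    have hw : w = -v := by
      have := congrArg (fun x => x - v) hsum
      simpa [add_sub_cancel_left, zero_sub] using this
    have hmono := hM ⟨v, w⟩ hvw
    simp only [hw] at hmono
    have hvv : v ⬝ᵥ v ≤ 0 := by
      have : (-v) ⬝ᵥ v = -(v ⬝ᵥ v) := by simp
      linarith [hmono.trans_eq this]
    have hvv' : 0 ≤ v ⬝ᵥ v := Finset.sum_nonneg fun i _ => mul_self_nonneg (v i)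
    have hv0 : v = 0 := by
      have : v ⬝ᵥ v = 0 := le_antisymm hvv hvv'
      exact (dotProduct_self_eq_zero).mp this
    have hw0 : w = 0 := by simp [hw, hv0]
    ext <;> simp [hv0, hw0]
  have := LinearMap.finrank_le_finrank_of_injective hinj
  simpa using this
end

section
/- A monotone subspace M ⊆ ℝⁿ × ℝⁿ is maximally monotone if and only if dim M = n. -/
open Matrix

/-!
On a monotone subspace `M` the map `(v, w) ↦ v + w` is injective: if `w = -v` then
`0 ≤ wᵀv = -|v|²`. Hence `dim M ≤ n`, and a monotone subspace of dimension `n` is maximal.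
If `dim M < n`, the image of `M` under this map is a proper subspace of `ℝⁿ`, so some `u ≠ 0`
is orthogonal to every `v + w` with `(v, w) ∈ M`. Adding `(u, u)` keeps `M` monotone, since
`(w + t u)ᵀ(v + t u) = wᵀv + t uᵀ(v + w) + t² |u|² = wᵀv + t² |u|²`, and strictly enlarges it,
since `uᵀ(u + u) ≠ 0`.
-/

theorem exists_ne_zero_forall_dotProduct_eq_zero {K ι : Type*} [Field K] [Fintype ι]
    {V : Submodule K (ι → K)} (hV : V ≠ ⊤) :
    ∃ u : ι → K, u ≠ 0 ∧ ∀ x ∈ V, u ⬝ᵥ x = 0 := by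
  classical
  obtain ⟨f, hf0, hfV⟩ := V.exists_dual_map_eq_bot_of_lt_top hV.lt_top inferInstance
  refine ⟨(dotProductEquiv K ι).symm f, by simpa using hf0, fun x hx => ?_⟩
  have hfx : f x = 0 := (Submodule.eq_bot_iff _).1 hfV _ (Submodule.mem_map_of_mem hx)
  calc (dotProductEquiv K ι).symm f ⬝ᵥ x
      = dotProductEquiv K ι ((dotProductEquiv K ι).symm f) x := rfl
    _ = 0 := by rw [LinearEquiv.apply_symm_apply, hfx]

noncomputable def sumMap (n : ℕ) : ((Fin n → ℝ) × (Fin n → ℝ)) →ₗ[ℝ] (Fin n → ℝ) :=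
  LinearMap.id.coprod LinearMap.id

@[simp]
theorem sumMap_apply {n : ℕ} (p : (Fin n → ℝ) × (Fin n → ℝ)) : sumMap n p = p.1 + p.2 := rfl

namespace IsMonotoneSubspace

variable {n : ℕ} {M : Submodule ℝ ((Fin n → ℝ) × (Fin n → ℝ))}

theorem eq_zero_of_sumMap_eq_zero (hM : IsMonotoneSubspace M) {p : (Fin n → ℝ) × (Fin n → ℝ)}
    (hp : p ∈ M) (hsum : sumMap n p = 0) : p = 0 := by
  have hsnd : p.2 = -p.1 := eq_neg_of_add_eq_zero_right hsum
  have hfst : p.1 = 0 := by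
    have hmono := hM p hp
    rw [hsnd, neg_dotProduct, neg_nonneg] at hmono
    exact dotProduct_self_eq_zero.1 (le_antisymm hmono (dotProduct_self_star_nonneg p.1))
  exact Prod.ext hfst (by simp [hsnd, hfst])

theorem finrank_le (hM : IsMonotoneSubspace M) : Module.finrank ℝ M ≤ n := by
  have hinj : Function.Injective ((sumMap n).domRestrict M) := by
    rw [← LinearMap.ker_eq_bot, Submodule.eq_bot_iff]
    rintro ⟨p, hp⟩ hker
    exact Subtype.ext (hM.eq_zero_of_sumMap_eq_zero hp hker)
  simpa using LinearMap.finrank_le_finrank_of_injective hinj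

theorem sup_span_diag (hM : IsMonotoneSubspace M) {u : Fin n → ℝ}
    (hu : ∀ p ∈ M, u ⬝ᵥ sumMap n p = 0) :
    IsMonotoneSubspace (M ⊔ Submodule.span ℝ {(u, u)}) := by
  intro p hp
  obtain ⟨m, hm, _, hz, rfl⟩ := Submodule.mem_sup.1 hp
  obtain ⟨t, rfl⟩ := Submodule.mem_span_singleton.1 hz
  have hperp : u ⬝ᵥ (m.1 + m.2) = 0 := hu m hm
  have hexpand : (m.2 + t • u) ⬝ᵥ (m.1 + t • u)
      = m.2 ⬝ᵥ m.1 + t * (u ⬝ᵥ (m.1 + m.2)) + t * t * (u ⬝ᵥ u) := by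
    simp only [add_dotProduct, dotProduct_add, smul_dotProduct, dotProduct_smul, smul_eq_mul,
      dotProduct_comm m.2 u]
    ring
  simp only [Prod.fst_add, Prod.snd_add, Prod.smul_fst, Prod.smul_snd]
  rw [hexpand, hperp]
  have huu : 0 ≤ u ⬝ᵥ u := dotProduct_self_star_nonneg u
  nlinarith [hM m hm, mul_self_nonneg t]

theorem exists_gt_of_finrank_lt (hM : IsMonotoneSubspace M) (hlt : Module.finrank ℝ M < n) :
    ∃ M', IsMonotoneSubspace M' ∧ M < M' := by
  have hV : M.map (sumMap n) ≠ ⊤ := by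
    intro htop
    have hle := Submodule.finrank_map_le (sumMap n) M
    rw [htop, finrank_top, Module.finrank_fin_fun] at hle
    omega
  obtain ⟨u, hu0, hu⟩ := exists_ne_zero_forall_dotProduct_eq_zero hV
  have hperp : ∀ p ∈ M, u ⬝ᵥ sumMap n p = 0 := fun p hp => hu _ (Submodule.mem_map_of_mem hp)
  refine ⟨_, hM.sup_span_diag hperp, left_lt_sup.2 fun hdiag => hu0 ?_⟩
  have huu : u ⬝ᵥ (u + u) = 0 := hperp _ (hdiag (Submodule.mem_span_singleton_self _))
  rw [dotProduct_add, ← two_mul, mul_eq_zero] at huu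
  exact dotProduct_self_eq_zero.1 (huu.resolve_left two_ne_zero)

end IsMonotoneSubspace

/-- A monotone subspace is maximally monotone (no monotone subspace strictly contains it)
if and only if its dimension equals n. -/
theorem maximally_monotone_iff_finrank_eq {n : ℕ}
    (M : Submodule ℝ ((Fin n → ℝ) × (Fin n → ℝ))) (hM : IsMonotoneSubspace M) :
    (∀ M' : Submodule ℝ ((Fin n → ℝ) × (Fin n → ℝ)),
      IsMonotoneSubspace M' → M ≤ M' → M' = M) ↔ Module.finrank ℝ M = n := by
  constructor
  · intro hmax
    refine hM.finrank_le.antisymm (not_lt.1 fun hlt => ?_)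
    obtain ⟨M', hM', hlt'⟩ := hM.exists_gt_of_finrank_lt hlt
    exact hlt'.ne (hmax M' hM' hlt'.le).symm
  · intro hrank M' hM' hle
    exact (Submodule.eq_of_le_of_finrank_le hle (by rw [hrank]; exact hM'.finrank_le)).symm
end

section
/- Let A ∈ ℝⁿˣⁿ, B ∈ ℝⁿˣᵐ, C ∈ ℝᵐˣⁿ, D ∈ ℝᵐˣᵐ, and let Q = Qᵀ ∈ ℝⁿˣⁿ satisfy the passivity LMI (Π := [[Q,0],[0,I_m]]·[[−A,−B],[C,D]] + [[−A,−B],[C,D]]ᵀ·[[Q,0],[0,I_m]] positive semidefinite). Assume (C,A) is observable. Then the subspace M := { ((−Ax−Bu, Cx+Du), (Qx, u)) : x ∈ ℝⁿ, u ∈ ℝᵐ } ⊆ ℝⁿ⁺ᵐ × ℝⁿ⁺ᵐ has dimension n + m and is a maximally monotone subspace of ℝⁿ⁺ᵐ × ℝⁿ⁺ᵐ. -/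
open Matrix

/-- A subspace `M ⊆ ℝⁿ⁺ᵐ × ℝⁿ⁺ᵐ` (with `ℝⁿ⁺ᵐ ≅ ℝⁿ × ℝᵐ`) is monotone if `wᵀv ≥ 0`
for all `(v,w) ∈ M`. -/
def IsMonotoneSubspacePair {n m : ℕ}
    (M : Submodule ℝ (((Fin n → ℝ) × (Fin m → ℝ)) × ((Fin n → ℝ) × (Fin m → ℝ)))) : Prop :=
  ∀ p ∈ M, 0 ≤ p.2.1 ⬝ᵥ p.1.1 + p.2.2 ⬝ᵥ p.1.2

/-!
Passivity makes `M` monotone: for `p = ((−Ax−Bu, Cx+Du), (Qx, u))` the pairing `wᵀv` is half the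
quadratic form of `Π` at `(x, u)`. Observability makes the parametrization `(x, u) ↦ p` injective
(its kernel consists of `(x, 0)` with `Ax = 0`, `Cx = 0`), so `dim M = n + m`. Finally, on any
monotone subspace `(v, w) ↦ v + w` is injective, since `w = −v` forces `−|v|² ≥ 0`; so no monotone
subspace has dimension above `n + m`, and one containing `M` equals `M`.
-/

lemma Matrix.IsSymm.dotProduct_mulVec_mul_add_transpose_mul {ι : Type*} [Fintype ι]
    {P : Matrix ι ι ℝ} (hP : P.IsSymm) (K : Matrix ι ι ℝ) (z : ι → ℝ) :
    z ⬝ᵥ ((P * K + Kᵀ * P) *ᵥ z) = 2 * ((P *ᵥ z) ⬝ᵥ (K *ᵥ z)) := by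
  have hPK : z ⬝ᵥ (P *ᵥ (K *ᵥ z)) = (P *ᵥ z) ⬝ᵥ (K *ᵥ z) := by
    rw [dotProduct_mulVec, ← mulVec_transpose, hP.eq]
  have hKP : z ⬝ᵥ (Kᵀ *ᵥ (P *ᵥ z)) = (P *ᵥ z) ⬝ᵥ (K *ᵥ z) := by
    rw [dotProduct_mulVec, vecMul_transpose, dotProduct_comm]
  rw [add_mulVec, dotProduct_add, ← mulVec_mulVec, ← mulVec_mulVec, hPK, hKP]
  ring

section System

variable {n m : ℕ} {A : Matrix (Fin n) (Fin n) ℝ} {B : Matrix (Fin n) (Fin m) ℝ}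
  {C : Matrix (Fin m) (Fin n) ℝ} {D : Matrix (Fin m) (Fin m) ℝ} {Q : Matrix (Fin n) (Fin n) ℝ}

lemma PassivityLMI.dotProduct_nonneg (hQ : Q.IsSymm) (hLMI : PassivityLMI A B C D Q)
    (x : Fin n → ℝ) (u : Fin m → ℝ) :
    0 ≤ (Q *ᵥ x) ⬝ᵥ (-(A *ᵥ x) - B *ᵥ u) + u ⬝ᵥ (C *ᵥ x + D *ᵥ u) := by
  have hP : (fromBlocks Q 0 0 (1 : Matrix (Fin m) (Fin m) ℝ)).IsSymm :=
    IsSymm.fromBlocks hQ (by simp) isSymm_one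
  have hLMIz := hLMI.dotProduct_mulVec_nonneg (Sum.elim x u)
  rw [star_trivial, hP.dotProduct_mulVec_mul_add_transpose_mul, fromBlocks_mulVec,
    fromBlocks_mulVec, sumElim_dotProduct_sumElim] at hLMIz
  simp only [zero_mulVec, add_zero, zero_add, one_mulVec, neg_mulVec, Sum.elim_comp_inl,
    Sum.elim_comp_inr, ← sub_eq_add_neg] at hLMIz
  linarith

variable (A B C D Q) in
noncomputable def systemGraphMap : ((Fin n → ℝ) × (Fin m → ℝ)) →ₗ[ℝ]
    ((Fin n → ℝ) × (Fin m → ℝ)) × ((Fin n → ℝ) × (Fin m → ℝ)) :=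
  ((-(A.mulVecLin ∘ₗ .fst ℝ _ _) - B.mulVecLin ∘ₗ .snd ℝ _ _).prod
      (C.mulVecLin ∘ₗ .fst ℝ _ _ + D.mulVecLin ∘ₗ .snd ℝ _ _)).prod
    ((Q.mulVecLin ∘ₗ .fst ℝ _ _).prod (.snd ℝ _ _))

lemma systemGraphMap_apply (x : Fin n → ℝ) (u : Fin m → ℝ) :
    systemGraphMap A B C D Q (x, u) = ((-(A *ᵥ x) - B *ᵥ u, C *ᵥ x + D *ᵥ u), (Q *ᵥ x, u)) :=
  rfl

lemma systemGraphMap_injective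
    (hobs : ∀ z : Fin n → ℝ, (∀ k < n, (C * A ^ k) *ᵥ z = 0) → z = 0) :
    Function.Injective (systemGraphMap A B C D Q) := by
  rw [injective_iff_map_eq_zero]
  rintro ⟨x, u⟩ h
  simp only [systemGraphMap_apply, Prod.mk_eq_zero] at h
  obtain ⟨⟨hAx, hCx⟩, -, rfl⟩ := h
  simp only [mulVec_zero, sub_zero, neg_eq_zero, add_zero] at hAx hCx
  have hx : x = 0 := hobs x fun k _ => by
    cases k with
    | zero => simpa using hCx
    | succ j => rw [← mulVec_mulVec, pow_succ, ← mulVec_mulVec, hAx, mulVec_zero, mulVec_zero]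
  simp [hx]

end System

lemma IsMonotoneSubspacePair.finrank_le {n m : ℕ}
    {M : Submodule ℝ (((Fin n → ℝ) × (Fin m → ℝ)) × ((Fin n → ℝ) × (Fin m → ℝ)))}
    (hM : IsMonotoneSubspacePair M) : Module.finrank ℝ M ≤ n + m := by
  let sum : M →ₗ[ℝ] (Fin n → ℝ) × (Fin m → ℝ) := (.fst ℝ _ _ + .snd ℝ _ _) ∘ₗ M.subtype
  have hsum : Function.Injective sum := by
    rw [injective_iff_map_eq_zero]
    rintro ⟨⟨v, w⟩, hp⟩ h
    obtain rfl : w = -v := eq_neg_of_add_eq_zero_right h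
    have hmono := hM _ hp
    simp only [Prod.fst_neg, Prod.snd_neg, neg_dotProduct] at hmono
    have h₁ : 0 ≤ v.1 ⬝ᵥ v.1 := dotProduct_self_star_nonneg v.1
    have h₂ : 0 ≤ v.2 ⬝ᵥ v.2 := dotProduct_self_star_nonneg v.2
    have hv : v = 0 :=
      Prod.ext (dotProduct_self_eq_zero.mp (by linarith)) (dotProduct_self_eq_zero.mp (by linarith))
    simp [hv]
  simpa using LinearMap.finrank_le_finrank_of_injective hsum

/-- For an observable passive system, the subspace
`M = {((−Ax−Bu, Cx+Du),(Qx,u)) : x ∈ ℝⁿ, u ∈ ℝᵐ}` has dimension `n+m` and is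
maximally monotone. -/
theorem passive_observable_maximal_monotone {n m : ℕ}
    (A : Matrix (Fin n) (Fin n) ℝ) (B : Matrix (Fin n) (Fin m) ℝ)
    (C : Matrix (Fin m) (Fin n) ℝ) (D : Matrix (Fin m) (Fin m) ℝ)
    (Q : Matrix (Fin n) (Fin n) ℝ) (hQ : Q.IsSymm)
    (hLMI : PassivityLMI A B C D Q)
    (hobs : ∀ z : Fin n → ℝ, (∀ k < n, (C * A ^ k) *ᵥ z = 0) → z = 0)
    (M : Submodule ℝ (((Fin n → ℝ) × (Fin m → ℝ)) × ((Fin n → ℝ) × (Fin m → ℝ))))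
    (hM : ∀ p, p ∈ M ↔ ∃ (x : Fin n → ℝ) (u : Fin m → ℝ),
      p = ((-(A *ᵥ x) - B *ᵥ u, C *ᵥ x + D *ᵥ u), (Q *ᵥ x, u))) :
    Module.finrank ℝ M = n + m ∧ IsMonotoneSubspacePair M ∧
      ∀ M', IsMonotoneSubspacePair M' → M ≤ M' → M' = M := by
  have hrange : M = LinearMap.range (systemGraphMap A B C D Q) := by
    ext p
    simp [hM, systemGraphMap_apply, eq_comm]
  have hdim : Module.finrank ℝ M = n + m := by
    rw [hrange, LinearMap.finrank_range_of_inj (systemGraphMap_injective hobs)]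
    simp
  have hmono : IsMonotoneSubspacePair M := fun p hp => by
    obtain ⟨x, u, rfl⟩ := (hM p).mp hp
    exact hLMI.dotProduct_nonneg hQ x u
  exact ⟨hdim, hmono, fun M' hM' hle =>
    (Submodule.eq_of_le_of_finrank_le hle (hdim ▸ hM'.finrank_le)).symm⟩
end

section
/- Suppose Q = Qᵀ ∈ ℝⁿˣⁿ is positive definite and satisfies the passivity LMI (Π := [[Q,0],[0,I_m]]·[[−A,−B],[C,D]] + [[−A,−B],[C,D]]ᵀ·[[Q,0],[0,I_m]] positive semidefinite), and suppose the system (A,B,C,D) is reciprocal with respect to an invertible symmetric matrix G ∈ ℝⁿˣⁿ and signature matrix σ, i.e., GA = (GA)ᵀ, GB = Cᵀσ, and σD = Dᵀσ. Then Q' := G Q⁻¹ G also satisfies the passivity LMI (and Q' is symmetric positive definite). -/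
open Matrix

/-- A signature matrix: a diagonal matrix with diagonal entries ±1. -/
def IsSignatureMatrix {m : ℕ} (σ : Matrix (Fin m) (Fin m) ℝ) : Prop :=
  ∃ d : Fin m → ℝ, (∀ i, d i = 1 ∨ d i = -1) ∧ σ = Matrix.diagonal d

/-! Set `M = [[−A,−B],[C,D]]`, `P = diag(Q, 1)` and `J = diag(G, −σ)`, so that the passivity LMI
says `P M + Mᵀ P ⪰ 0`. Reciprocity is exactly the intertwining relation `J M = Mᵀ J`, and under it
the congruence by `P⁻¹ J` turns `P M + Mᵀ P` into `P' M + Mᵀ P'` with `P' = J P⁻¹ J`; since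
`σ² = 1`, `P' = diag(G Q⁻¹ G, 1)`. Positive definiteness of `G Q⁻¹ G = Gᵀ Q⁻¹ G` follows from that
of `Q⁻¹`, as `G` is invertible. -/

section

variable {R ι n m : Type*} [CommRing R] [Fintype ι] [DecidableEq ι] [Fintype n] [Fintype m]

def Matrix.lyapunovForm (P M : Matrix ι ι R) : Matrix ι ι R := P * M + Mᵀ * P

theorem Matrix.transpose_mul_lyapunovForm_mul {P J M : Matrix ι ι R}
    (hP : IsUnit P) (hPT : Pᵀ = P) (hJT : Jᵀ = J) (hJM : J * M = Mᵀ * J) :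
    (P⁻¹ * J)ᵀ * lyapunovForm P M * (P⁻¹ * J) = lyapunovForm (J * P⁻¹ * J) M := by
  have hPd := (isUnit_iff_isUnit_det P).mp hP
  rw [transpose_mul, transpose_nonsing_inv, hPT, hJT, lyapunovForm, lyapunovForm]
  simp only [Matrix.mul_add, Matrix.add_mul, Matrix.mul_assoc,
    mul_nonsing_inv_cancel_left _ _ hPd, nonsing_inv_mul_cancel_left _ _ hPd]
  rw [add_comm, ← hJM, ← Matrix.mul_assoc J M, hJM, Matrix.mul_assoc]

theorem Matrix.PosSemidef.lyapunovForm_mul_inv_mul [PartialOrder R] [StarRing R] [TrivialStar R]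
    {P J M : Matrix ι ι R} (h : (lyapunovForm P M).PosSemidef)
    (hP : IsUnit P) (hPT : Pᵀ = P) (hJT : Jᵀ = J) (hJM : J * M = Mᵀ * J) :
    (lyapunovForm (J * P⁻¹ * J) M).PosSemidef := by
  rw [← transpose_mul_lyapunovForm_mul hP hPT hJT hJM, ← conjTranspose_eq_transpose_of_trivial]
  exact h.conjTranspose_mul_mul_same _

theorem Matrix.fromBlocks_mul_eq_transpose_mul_of_reciprocal {A : Matrix n n R}
    {B : Matrix n m R} {C : Matrix m n R} {D : Matrix m m R} {G : Matrix n n R}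
    {S : Matrix m m R} (hGT : Gᵀ = G) (hST : Sᵀ = S) (hA : G * A = (G * A)ᵀ)
    (hB : G * B = Cᵀ * S) (hD : S * D = Dᵀ * S) :
    fromBlocks G 0 0 (-S) * fromBlocks (-A) (-B) C D =
      (fromBlocks (-A) (-B) C D)ᵀ * fromBlocks G 0 0 (-S) := by
  have hA' : G * A = Aᵀ * G := by rw [hA, transpose_mul, hGT]
  have hC : S * C = Bᵀ * G := by
    simpa only [transpose_mul, transpose_transpose, hGT, hST] using (congrArg transpose hB).symm
  simp [fromBlocks_transpose, fromBlocks_multiply, hA', hB, hC, hD]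

theorem Matrix.fromBlocks_mul_inv_mul_of_mul_self [DecidableEq n] [DecidableEq m]
    {Q G : Matrix n n R} {S : Matrix m m R} (hQ : IsUnit Q) (hS : S * S = 1) :
    fromBlocks G 0 0 (-S) * (fromBlocks Q 0 0 1)⁻¹ * fromBlocks G 0 0 (-S) =
      fromBlocks (G * Q⁻¹ * G) 0 0 1 := by
  rw [inv_fromBlocks_zero₁₂_of_isUnit_iff _ _ _ (iff_of_true hQ isUnit_one)]
  simp [fromBlocks_multiply, hS]

end

theorem passivityLMI_iff {n m : ℕ} {A : Matrix (Fin n) (Fin n) ℝ} {B : Matrix (Fin n) (Fin m) ℝ}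
    {C : Matrix (Fin m) (Fin n) ℝ} {D : Matrix (Fin m) (Fin m) ℝ} {Q : Matrix (Fin n) (Fin n) ℝ} :
    PassivityLMI A B C D Q ↔
      (lyapunovForm (fromBlocks Q 0 0 1) (fromBlocks (-A) (-B) C D)).PosSemidef :=
  Iff.rfl

namespace IsSignatureMatrix

variable {m : ℕ} {S : Matrix (Fin m) (Fin m) ℝ}

theorem transpose_eq (hS : IsSignatureMatrix S) : Sᵀ = S := by
  obtain ⟨d, -, rfl⟩ := hS
  exact diagonal_transpose d

theorem mul_self (hS : IsSignatureMatrix S) : S * S = 1 := by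
  obtain ⟨d, hd, rfl⟩ := hS
  rw [diagonal_mul_diagonal, ← diagonal_one]
  congr 1
  funext i
  rcases hd i with h | h <;> simp [h]

end IsSignatureMatrix

/-- If `Q > 0` satisfies the passivity LMI and the system is reciprocal with respect to `G`
and `σ`, then `Q' := G Q⁻¹ G` also satisfies the passivity LMI, and `Q'` is symmetric
positive definite. -/
theorem passivity_LMI_of_reciprocal {n m : ℕ}
    (A : Matrix (Fin n) (Fin n) ℝ) (B : Matrix (Fin n) (Fin m) ℝ)
    (C : Matrix (Fin m) (Fin n) ℝ) (D : Matrix (Fin m) (Fin m) ℝ)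
    (Q G : Matrix (Fin n) (Fin n) ℝ) (σ : Matrix (Fin m) (Fin m) ℝ)
    (hQ : Q.PosDef) (hLMI : PassivityLMI A B C D Q)
    (hGsymm : G.IsSymm) (hGinv : IsUnit G) (hσ : IsSignatureMatrix σ)
    (hrec₁ : G * A = (G * A)ᵀ) (hrec₂ : G * B = Cᵀ * σ) (hrec₃ : σ * D = Dᵀ * σ) :
    PassivityLMI A B C D (G * Q⁻¹ * G) ∧ (G * Q⁻¹ * G).PosDef := by
  have hGT : Gᵀ = G := hGsymm
  have hQT : Qᵀ = Q := isHermitian_iff_isSymm.mp hQ.isHermitian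
  have hJM := fromBlocks_mul_eq_transpose_mul_of_reciprocal hGT hσ.transpose_eq hrec₁ hrec₂ hrec₃
  have hLMI' := (passivityLMI_iff.mp hLMI).lyapunovForm_mul_inv_mul
    (isUnit_fromBlocks_zero₁₂.mpr ⟨hQ.isUnit, isUnit_one⟩)
    (by simp [fromBlocks_transpose, hQT]) (by simp [fromBlocks_transpose, hGT, hσ.transpose_eq])
    hJM
  rw [fromBlocks_mul_inv_mul_of_mul_self hQ.isUnit hσ.mul_self] at hLMI'
  refine ⟨passivityLMI_iff.mpr hLMI', ?_⟩
  simpa [conjTranspose_eq_transpose_of_trivial, hGT] using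
    hQ.inv.conjTranspose_mul_mul_same (mulVec_injective_of_isUnit hGinv)
end

section
/- Let (A,B,C,D) be reciprocal with respect to an invertible symmetric G ∈ ℝⁿˣⁿ and signature matrix σ, i.e., GA = (GA)ᵀ, GB = Cᵀσ, σD = Dᵀσ. Let x : ℝ → ℝⁿ be differentiable and u, y : ℝ → ℝᵐ be such that ẋ(t) = Ax(t) + Bu(t) and y(t) = Cx(t) + Du(t) for all t ∈ ℝ. Then for all t, d/dt [x(t)ᵀ G x(−t)] = u(t)ᵀ σ y(−t) − y(t)ᵀ σ u(−t). -/
open Matrix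

/-!
Differentiating `x(s)ᵀ G x(−s)` and substituting the state equation at `t` and at `−t` leaves
the bilinear expression `(A v + B p)ᵀ G w − vᵀ G (A w + B q)` with `v = x(t)`, `w = x(−t)`,
`p = u(t)`, `q = u(−t)`. The reciprocity relations let every `A`, `B` in it be traded for `C`, `D`
under `σ` (`AᵀG = GA`, `BᵀG = σC`, `σD = Dᵀσ`), and the `A`-terms and the `D`-terms cancel,
leaving `pᵀ σ (C w + D q) − (C v + D p)ᵀ σ q`, i.e. `u(t)ᵀ σ y(−t) − y(t)ᵀ σ u(−t)`.
-/

theorem IsSignatureMatrix.isSymm {m : ℕ} {σ : Matrix (Fin m) (Fin m) ℝ}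
    (hσ : IsSignatureMatrix σ) : σ.IsSymm := by
  obtain ⟨d, -, rfl⟩ := hσ
  exact diagonal_transpose d

section Calculus

variable {𝕜 ι κ : Type*} [NontriviallyNormedField 𝕜] [Fintype ι]

theorem HasDerivAt.dotProduct {f g : 𝕜 → ι → 𝕜} {f' g' : ι → 𝕜} {t : 𝕜}
    (hf : HasDerivAt f f' t) (hg : HasDerivAt g g' t) :
    HasDerivAt (fun s => f s ⬝ᵥ g s) (f' ⬝ᵥ g t + f t ⬝ᵥ g') t := by
  simp only [_root_.dotProduct, ← Finset.sum_add_distrib]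
  exact HasDerivAt.fun_sum fun i _ => (hasDerivAt_pi.1 hf i).mul (hasDerivAt_pi.1 hg i)

theorem HasDerivAt.const_mulVec (M : Matrix κ ι 𝕜) {f : 𝕜 → ι → 𝕜} {f' : ι → 𝕜} {t : 𝕜}
    (hf : HasDerivAt f f' t) : HasDerivAt (fun s => M *ᵥ f s) (M *ᵥ f') t :=
  hasDerivAt_pi.2 fun i => by simpa [mulVec] using (hasDerivAt_const t (M i)).dotProduct hf

theorem HasDerivAt.comp_neg {E : Type*} [NormedAddCommGroup E] [NormedSpace 𝕜 E]
    {f : 𝕜 → E} {f' : E} {t : 𝕜} (hf : HasDerivAt f f' (-t)) :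
    HasDerivAt (fun s => f (-s)) (-f') t := by
  simpa [Function.comp_def] using hf.scomp t (hasDerivAt_neg t)

end Calculus

section Reciprocity

variable {R ι κ : Type*} [CommRing R] [Fintype ι] [Fintype κ]

theorem mulVec_dotProduct (M : Matrix κ ι R) (v : ι → R) (w : κ → R) :
    (M *ᵥ v) ⬝ᵥ w = v ⬝ᵥ (Mᵀ *ᵥ w) := by
  rw [dotProduct_mulVec, vecMul_transpose, dotProduct_comm]

theorem reciprocal_dotProduct_identity {A : Matrix ι ι R} {B : Matrix ι κ R}
    {C : Matrix κ ι R} {D : Matrix κ κ R} {G : Matrix ι ι R} {σ : Matrix κ κ R}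
    (hG : G.IsSymm) (hσ : σ.IsSymm) (hrec₁ : G * A = (G * A)ᵀ) (hrec₂ : G * B = Cᵀ * σ)
    (hrec₃ : σ * D = Dᵀ * σ) (v w : ι → R) (p q : κ → R) :
    (A *ᵥ v + B *ᵥ p) ⬝ᵥ (G *ᵥ w) - v ⬝ᵥ (G *ᵥ (A *ᵥ w + B *ᵥ q))
      = p ⬝ᵥ (σ *ᵥ (C *ᵥ w + D *ᵥ q)) - (C *ᵥ v + D *ᵥ p) ⬝ᵥ (σ *ᵥ q) := by
  have hAG : Aᵀ * G = G * A := by rw [hrec₁, transpose_mul, hG.eq]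
  have hBG : Bᵀ * G = σ * C := by
    rw [← hG.eq, ← transpose_mul, hrec₂, transpose_mul, hσ.eq, transpose_transpose]
  simp only [mulVec_add, add_dotProduct, dotProduct_add, mulVec_dotProduct, mulVec_mulVec,
    hAG, hBG, ← hrec₂, ← hrec₃]
  ring

end Reciprocity

theorem reciprocal_bilinear_derivative_general {n m : ℕ}
    (A : Matrix (Fin n) (Fin n) ℝ) (B : Matrix (Fin n) (Fin m) ℝ)
    (C : Matrix (Fin m) (Fin n) ℝ) (D : Matrix (Fin m) (Fin m) ℝ)
    (G : Matrix (Fin n) (Fin n) ℝ) (σ : Matrix (Fin m) (Fin m) ℝ)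
    (hGsymm : G.IsSymm) (hσ : IsSignatureMatrix σ)
    (hrec₁ : G * A = (G * A)ᵀ) (hrec₂ : G * B = Cᵀ * σ) (hrec₃ : σ * D = Dᵀ * σ)
    (x : ℝ → Fin n → ℝ) (u y : ℝ → Fin m → ℝ)
    (hx : ∀ t : ℝ, HasDerivAt x (A *ᵥ x t + B *ᵥ u t) t)
    (hy : ∀ t : ℝ, y t = C *ᵥ x t + D *ᵥ u t) :
    ∀ t : ℝ, HasDerivAt (fun s => x s ⬝ᵥ (G *ᵥ x (-s)))
      (u t ⬝ᵥ (σ *ᵥ y (-t)) - y t ⬝ᵥ (σ *ᵥ u (-t))) t := by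
  intro t
  have hderiv := (hx t).dotProduct ((hx (-t)).comp_neg.const_mulVec G)
  rw [mulVec_neg, dotProduct_neg, ← sub_eq_add_neg,
    reciprocal_dotProduct_identity hGsymm hσ.isSymm hrec₁ hrec₂ hrec₃] at hderiv
  rwa [hy t, hy (-t)]

/-- For a system reciprocal with respect to `G` and `σ`, along any solution one has
`d/dt [x(t)ᵀ G x(−t)] = u(t)ᵀ σ y(−t) − y(t)ᵀ σ u(−t)`. -/
theorem reciprocal_bilinear_derivative {n m : ℕ}
    (A : Matrix (Fin n) (Fin n) ℝ) (B : Matrix (Fin n) (Fin m) ℝ)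
    (C : Matrix (Fin m) (Fin n) ℝ) (D : Matrix (Fin m) (Fin m) ℝ)
    (G : Matrix (Fin n) (Fin n) ℝ) (σ : Matrix (Fin m) (Fin m) ℝ)
    (hGsymm : G.IsSymm) (hGinv : IsUnit G) (hσ : IsSignatureMatrix σ)
    (hrec₁ : G * A = (G * A)ᵀ) (hrec₂ : G * B = Cᵀ * σ) (hrec₃ : σ * D = Dᵀ * σ)
    (x : ℝ → Fin n → ℝ) (u y : ℝ → Fin m → ℝ)
    (hx : ∀ t : ℝ, HasDerivAt x (A *ᵥ x t + B *ᵥ u t) t)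
    (hy : ∀ t : ℝ, y t = C *ᵥ x t + D *ᵥ u t) :
    ∀ t : ℝ, HasDerivAt (fun s => x s ⬝ᵥ (G *ᵥ x (-s)))
      (u t ⬝ᵥ (σ *ᵥ y (-t)) - y t ⬝ᵥ (σ *ᵥ u (-t))) t :=
  reciprocal_bilinear_derivative_general A B C D G σ hGsymm hσ hrec₁ hrec₂ hrec₃ x u y hx hy
end

section
/- Let X ⊆ ℝⁿ be a nonempty open convex set, K : X → ℝ smooth, and set G(x) := ∇²K(x). Let F : X × ℝᵐ → ℝⁿ be smooth. Then the matrix ∂[G(x)F(x,u)]/∂x is symmetric for all (x,u) ∈ X × ℝᵐ if and only if G(x) ∂F/∂x(x,u) = (∂F/∂x(x,u))ᵀ G(x) for all (x,u) ∈ X × ℝᵐ. -/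
open Matrix

/-- Jacobian matrix with respect to the first (state) argument. -/
noncomputable def jacX {n m p : ℕ} (f : (Fin n → ℝ) → (Fin m → ℝ) → (Fin p → ℝ))
    (x : Fin n → ℝ) (u : Fin m → ℝ) : Matrix (Fin p) (Fin n) ℝ :=
  Matrix.of fun i k => fderiv ℝ (fun x' => f x' u i) x (Pi.single k 1)

/-- The Hessian matrix of a function `K : ℝⁿ → ℝ`. -/
noncomputable def hessMat {n : ℕ} (K : (Fin n → ℝ) → ℝ) (x : Fin n → ℝ) :
    Matrix (Fin n) (Fin n) ℝ :=
  Matrix.of fun i j => fderiv ℝ (fun x' => fderiv ℝ K x' (Pi.single j 1)) x (Pi.single i 1)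

/-- auxiliary: directional derivative of `K` in direction `e j`. -/
noncomputable def gAux {n : ℕ} (K : (Fin n → ℝ) → ℝ) (j : Fin n) : (Fin n → ℝ) → ℝ :=
  fun y => fderiv ℝ K y (Pi.single j 1)

/-- For a Hessian metric `G = ∇²K` on a nonempty open convex set `X`, and a smooth `F`,
the matrix `∂[G(x)F(x,u)]/∂x` is symmetric for all `(x,u)` if and only if
`G(x) ∂F/∂x = (∂F/∂x)ᵀ G(x)` for all `(x,u)`. -/
theorem hessian_reciprocity_simplification {n m : ℕ}
    (X : Set (Fin n → ℝ)) (hXne : X.Nonempty) (hXopen : IsOpen X) (hXconv : Convex ℝ X)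
    (K : (Fin n → ℝ) → ℝ) (hK : ContDiffOn ℝ (⊤ : ℕ∞) K X)
    (F : (Fin n → ℝ) → (Fin m → ℝ) → (Fin n → ℝ))
    (hF : ContDiffOn ℝ (⊤ : ℕ∞) (fun p : (Fin n → ℝ) × (Fin m → ℝ) => F p.1 p.2) (X ×ˢ Set.univ)) :
    (∀ x ∈ X, ∀ u : Fin m → ℝ,
      (jacX (fun x' u' => (hessMat K x') *ᵥ F x' u') x u).IsSymm)
    ↔ (∀ x ∈ X, ∀ u : Fin m → ℝ,
        hessMat K x * jacX F x u = (jacX F x u)ᵀ * hessMat K x) := by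
  have key : ∀ x ∈ X, ∀ u : Fin m → ℝ,
      ((jacX (fun x' u' => (hessMat K x') *ᵥ F x' u') x u).IsSymm ↔
        hessMat K x * jacX F x u = (jacX F x u)ᵀ * hessMat K x) := by
    intro x hx u
    have hKx : ContDiffAt ℝ (⊤ : ℕ∞) K x := hK.contDiffAt (hXopen.mem_nhds hx)
    have hdK : ContDiffAt ℝ (⊤ : ℕ∞) (fderiv ℝ K) x := hKx.fderiv_right (by simp)
    have hgx : ∀ j, ContDiffAt ℝ (⊤ : ℕ∞) (gAux K j) x := fun j =>
      hdK.clm_apply contDiffAt_const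
    have hdgx : ∀ j, ContDiffAt ℝ (⊤ : ℕ∞) (fderiv ℝ (gAux K j)) x := fun j =>
      (hgx j).fderiv_right (by simp)
    have hFx : ContDiffAt ℝ (⊤ : ℕ∞) (fun x' => F x' u) x := by
      have h1 : ContDiffAt ℝ (⊤ : ℕ∞) (fun p : (Fin n → ℝ) × (Fin m → ℝ) => F p.1 p.2) (x, u) :=
        hF.contDiffAt ((hXopen.prod isOpen_univ).mem_nhds ⟨hx, trivial⟩)
      exact h1.comp x (contDiffAt_id.prodMk contDiffAt_const)
    have hFj : ∀ j, DifferentiableAt ℝ (fun x' => F x' u j) x := fun j =>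
      ((contDiffAt_pi.1 hFx) j).differentiableAt (by simp)
    have hdg_i : ∀ i j, DifferentiableAt ℝ (fun x' => fderiv ℝ (gAux K j) x' (Pi.single i 1)) x :=
      fun i j => (((hdgx j).clm_apply contDiffAt_const).differentiableAt (by simp))
    -- Schwarz symmetry of the second derivative of `gAux K j` and of `K`
    have hsymm : ∀ j (v w : Fin n → ℝ),
        fderiv ℝ (fderiv ℝ (gAux K j)) x v w = fderiv ℝ (fderiv ℝ (gAux K j)) x w v :=
      fun j => (hgx j).isSymmSndFDerivAt (by simp; exact WithTop.coe_le_coe.mpr le_top)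
    have hKsymm : ∀ (v w : Fin n → ℝ),
        fderiv ℝ (fderiv ℝ K) x v w = fderiv ℝ (fderiv ℝ K) x w v :=
      hKx.isSymmSndFDerivAt (by simp; exact WithTop.coe_le_coe.mpr le_top)
    -- symmetry of the Hessian
    have hGsymm : (hessMat K x).IsSymm := by
      have heq : ∀ i j : Fin n, hessMat K x i j
          = fderiv ℝ (fderiv ℝ K) x (Pi.single i 1) (Pi.single j 1) := by
        intro i j
        show fderiv ℝ (fun y => fderiv ℝ K y (Pi.single j 1)) x (Pi.single i 1) = _
        rw [fderiv_clm_apply (hdK.differentiableAt (by simp)) (differentiableAt_const _)]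
        simp
      exact Matrix.IsSymm.ext fun i j => by rw [heq, heq, hKsymm]
    -- decomposition of the Jacobian
    set S : Matrix (Fin n) (Fin n) ℝ := Matrix.of fun i k =>
      ∑ j, F x u j * fderiv ℝ (fderiv ℝ (gAux K j)) x (Pi.single i 1) (Pi.single k 1) with hS
    have hSsymm : S.IsSymm := by
      refine Matrix.IsSymm.ext fun i k => ?_
      simp only [hS, Matrix.of_apply]
      exact Finset.sum_congr rfl fun j _ => by rw [hsymm]
    have hdecomp : jacX (fun x' u' => (hessMat K x') *ᵥ F x' u') x u
        = S + hessMat K x * jacX F x u := by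
      ext i k
      have hfun : (fun x' => ((hessMat K x') *ᵥ F x' u) i)
          = fun x' => ∑ j, fderiv ℝ (gAux K j) x' (Pi.single i 1) * F x' u j := by
        funext x'
        simp only [hessMat, Matrix.mulVec, dotProduct, Matrix.of_apply]
        rfl
      have h1 : jacX (fun x' u' => (hessMat K x') *ᵥ F x' u') x u i k
          = fderiv ℝ (fun x' => ∑ j, fderiv ℝ (gAux K j) x' (Pi.single i 1) * F x' u j) x
              (Pi.single k 1) := by
        simp only [jacX, Matrix.of_apply]
        rw [hfun]
      rw [h1, fderiv_fun_sum (fun j _ => (hdg_i i j).fun_mul (hFj j))]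
      simp only [ContinuousLinearMap.coe_sum', Finset.sum_apply]
      rw [Matrix.add_apply, Matrix.mul_apply, hS, Matrix.of_apply, ← Finset.sum_add_distrib]
      refine Finset.sum_congr rfl fun j _ => ?_
      rw [fderiv_fun_mul (hdg_i i j) (hFj j)]
      have h2 : fderiv ℝ (fun x' => fderiv ℝ (gAux K j) x' (Pi.single i 1)) x
          = (fderiv ℝ (fderiv ℝ (gAux K j)) x).flip (Pi.single i 1) := by
        rw [fderiv_clm_apply ((hdgx j).differentiableAt (by simp)) (differentiableAt_const _)]
        simp
      rw [h2]
      simp only [ContinuousLinearMap.add_apply, ContinuousLinearMap.coe_smul',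
        Pi.smul_apply, smul_eq_mul, ContinuousLinearMap.flip_apply]
      have h3 : (hessMat K x) i j = fderiv ℝ (gAux K j) x (Pi.single i 1) := rfl
      have h4 : jacX F x u j k = fderiv ℝ (fun x' => F x' u j) x (Pi.single k 1) := rfl
      rw [h3, h4, hsymm]; ring
    rw [hdecomp]
    unfold Matrix.IsSymm
    rw [Matrix.transpose_add, hSsymm.eq, Matrix.transpose_mul, hGsymm.eq, add_right_inj]
    exact eq_comm
  exact ⟨fun h x hx u => (key x hx u).1 (h x hx u),
    fun h x hx u => (key x hx u).2 (h x hx u)⟩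
end

section
/- Let P : ℝⁿ → ℝ and C₁,…,C_m : ℝⁿ → ℝ be differentiable, and define V(x,u) := P(x) − Σ_{j=1}^m C_j(x) u_j. Then the relaxation condition xᵀ ∂V/∂x(x,u) − uᵀ ∂V/∂u(x,u) ≥ 0 holds for all (x,u) ∈ ℝⁿ × ℝᵐ if and only if xᵀ ∇P(x) ≥ 0 for all x ∈ ℝⁿ and C_j(x) = xᵀ ∇C_j(x) for all x ∈ ℝⁿ and all j = 1,…,m. -/
/-!
Since `v ⬝ᵥ gradVec f x = fderiv ℝ f x v`, the relaxation expression of `V` at `(x, u)` equals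
`xᵀ∇P(x) + Σⱼ uⱼ (Cⱼ(x) − xᵀ∇Cⱼ(x))`, an affine function of `u`. Such a function is nonnegative
for all `u` iff its constant term is nonnegative and all its coefficients vanish.
-/

open Matrix

/-- The gradient (vector of partial derivatives) of `f : ℝⁿ → ℝ`. -/
noncomputable def gradVec {n : ℕ} (f : (Fin n → ℝ) → ℝ) (x : Fin n → ℝ) : Fin n → ℝ :=
  fun i => fderiv ℝ f x (Pi.single i 1)

theorem dotProduct_gradVec {n : ℕ} (f : (Fin n → ℝ) → ℝ) (x v : Fin n → ℝ) :
    v ⬝ᵥ gradVec f x = fderiv ℝ f x v := by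
  conv_rhs => rw [← Finset.univ_sum_single v]
  simp only [map_sum, dotProduct, gradVec]
  refine Finset.sum_congr rfl fun i _ => ?_
  rw [← smul_eq_mul, ← map_smul, ← Pi.single_smul', smul_eq_mul, mul_one]

theorem fderiv_sub_sum_mul_const_apply {E ι : Type*} [NormedAddCommGroup E] [NormedSpace ℝ E]
    [Fintype ι] {P : E → ℝ} {C : ι → E → ℝ} {x : E} (hP : DifferentiableAt ℝ P x)
    (hC : ∀ j, DifferentiableAt ℝ (C j) x) (u : ι → ℝ) (v : E) :
    fderiv ℝ (fun x' => P x' - ∑ j, C j x' * u j) x v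
      = fderiv ℝ P x v - ∑ j, u j * fderiv ℝ (C j) x v := by
  have h := hP.hasFDerivAt.fun_sub
    (HasFDerivAt.fun_sum (u := Finset.univ) fun j _ => (hC j).hasFDerivAt.mul_const (u j))
  rw [h.fderiv]
  simp

theorem fderiv_const_sub_sum_const_mul_apply {ι : Type*} [Fintype ι] (p : ℝ) (c u v : ι → ℝ) :
    fderiv ℝ (fun u' : ι → ℝ => p - ∑ j, c j * u' j) u v = -∑ j, c j * v j := by
  have h := (hasFDerivAt_const p u).fun_sub (HasFDerivAt.fun_sum (u := Finset.univ)
    fun j _ => (hasFDerivAt_apply (𝕜 := ℝ) j u).const_mul (c j))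
  rw [h.fderiv]
  simp

theorem eq_zero_of_forall_nonneg_add_mul {a b : ℝ} (h : ∀ t, 0 ≤ a + t * b) : b = 0 := by
  by_contra hb
  have := h (-(a + 1) / b)
  rw [div_mul_cancel₀ _ hb] at this
  linarith

theorem forall_nonneg_add_sum_mul_iff {ι : Type*} [Fintype ι] (a : ℝ) (b : ι → ℝ) :
    (∀ u : ι → ℝ, 0 ≤ a + ∑ j, u j * b j) ↔ 0 ≤ a ∧ ∀ j, b j = 0 := by
  classical
  refine ⟨fun h => ⟨by simpa using h 0, fun j => ?_⟩, fun ⟨ha, hb⟩ u => by simpa [hb] using ha⟩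
  exact eq_zero_of_forall_nonneg_add_mul (a := a) fun t => by
    simpa [Pi.single_apply] using h (Pi.single j t)

theorem relaxation_expr_affine_potential {n m : ℕ} {P : (Fin n → ℝ) → ℝ}
    {C : Fin m → (Fin n → ℝ) → ℝ} {x : Fin n → ℝ} (hP : DifferentiableAt ℝ P x)
    (hC : ∀ j, DifferentiableAt ℝ (C j) x) (u : Fin m → ℝ) :
    x ⬝ᵥ gradVec (fun x' => P x' - ∑ j, C j x' * u j) x
        - u ⬝ᵥ gradVec (fun u' => P x - ∑ j, C j x * u' j) u
      = x ⬝ᵥ gradVec P x + ∑ j, u j * (C j x - x ⬝ᵥ gradVec (C j) x) := by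
  simp only [dotProduct_gradVec, fderiv_sub_sum_mul_const_apply hP hC,
    fderiv_const_sub_sum_const_mul_apply]
  simp only [mul_sub, Finset.sum_sub_distrib, mul_comm (C _ x)]
  ring

/-- For the potential `V(x,u) = P(x) − Σⱼ Cⱼ(x)uⱼ`, the relaxation condition
`xᵀ ∂V/∂x − uᵀ ∂V/∂u ≥ 0` for all `(x,u)` holds iff `xᵀ∇P(x) ≥ 0` for all `x` and
`Cⱼ(x) = xᵀ∇Cⱼ(x)` for all `x` and `j`. -/
theorem relaxation_condition_for_affine_potential {n m : ℕ}
    (P : (Fin n → ℝ) → ℝ) (C : Fin m → (Fin n → ℝ) → ℝ)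
    (hP : Differentiable ℝ P) (hC : ∀ j, Differentiable ℝ (C j)) :
    (∀ (x : Fin n → ℝ) (u : Fin m → ℝ),
      0 ≤ x ⬝ᵥ gradVec (fun x' => P x' - ∑ j, C j x' * u j) x
            - u ⬝ᵥ gradVec (fun u' => P x - ∑ j, C j x * u' j) u) ↔
    ((∀ x : Fin n → ℝ, 0 ≤ x ⬝ᵥ gradVec P x) ∧
      (∀ (x : Fin n → ℝ) (j : Fin m), C j x = x ⬝ᵥ gradVec (C j) x)) := by
  simp_rw [relaxation_expr_affine_potential (hP _) (fun j => hC j _),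
    forall_nonneg_add_sum_mul_iff, sub_eq_zero]
  exact forall_and
end
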